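/- arXiv:2208.04411 — 3 statements merged into one kernel-verified Lean document; each statement's English description precedes it below -/
import Mathlib

section
/- Let x, y ∈ ℝ^n and suppose that xᵀN x ≤ yᵀN y for every positive semidefinite matrix N ∈ S₊^n. Then there exists a real α with −1 ≤ α ≤ 1 such that x = α y. -/
/-! Testing the hypothesis on the rank-one matrices `v vᵀ` gives `(v ⬝ x)² ≤ (v ⬝ y)²` for
every `v`. For `v` the component of `x` orthogonal to `y` this forces that component to vanish,
and `v = y` bounds the remaining coefficient by `1` in absolute value. -/

open Matrix

section

variable {ι R : Type*} [Fintype ι]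

theorem Matrix.dotProduct_vecMulVec_self_mulVec [CommSemiring R] (v x : ι → R) :
    x ⬝ᵥ (vecMulVec v v *ᵥ x) = (v ⬝ᵥ x) ^ 2 := by
  rw [vecMulVec_mulVec, op_smul_eq_smul, dotProduct_smul, dotProduct_comm, smul_eq_mul, sq]

variable [Field R] [LinearOrder R] [IsStrictOrderedRing R]

/-- With the junk value `0 / 0 = 0` the coefficient `x ⬝ᵥ y / y ⬝ᵥ y` also covers `y = 0`. -/
theorem Matrix.eq_smul_of_forall_sq_dotProduct_le {x y : ι → R}
    (h : ∀ v, (v ⬝ᵥ x) ^ 2 ≤ (v ⬝ᵥ y) ^ 2) : x = (x ⬝ᵥ y / y ⬝ᵥ y) • y := by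
  set α := x ⬝ᵥ y / y ⬝ᵥ y
  set w := x - α • y
  have hwy : w ⬝ᵥ y = 0 := by
    rcases eq_or_ne (y ⬝ᵥ y) 0 with hyy | hyy
    · simp [dotProduct_self_eq_zero.mp hyy]
    · simp [w, α, sub_dotProduct, div_mul_cancel₀ _ hyy]
  have hwx : w ⬝ᵥ x = 0 := by
    simpa [hwy] using h w
  have hww : w ⬝ᵥ w = 0 := by
    simp only [w, dotProduct_sub, dotProduct_smul, hwx, hwy, smul_zero, sub_zero]
  exact sub_eq_zero.mp (dotProduct_self_eq_zero.mp hww)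

theorem Matrix.abs_dotProduct_div_dotProduct_self_le_one {x y : ι → R}
    (h : (y ⬝ᵥ x) ^ 2 ≤ (y ⬝ᵥ y) ^ 2) : |x ⬝ᵥ y / y ⬝ᵥ y| ≤ 1 := by
  rw [abs_div, dotProduct_comm]
  exact div_le_one_of_le₀ (sq_le_sq.mp h) (abs_nonneg _)

end

/-- If `xᵀNx ≤ yᵀNy` for every positive semidefinite matrix `N`, then
`x = α • y` for some `α` with `-1 ≤ α ≤ 1`. -/
theorem collinear_of_quadForm_le (n : ℕ) (x y : Fin n → ℝ)
    (h : ∀ N : Matrix (Fin n) (Fin n) ℝ, N.PosSemidef →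
      x ⬝ᵥ (N *ᵥ x) ≤ y ⬝ᵥ (N *ᵥ y)) :
    ∃ α : ℝ, -1 ≤ α ∧ α ≤ 1 ∧ x = α • y := by
  have hsq : ∀ v : Fin n → ℝ, (v ⬝ᵥ x) ^ 2 ≤ (v ⬝ᵥ y) ^ 2 := fun v => by
    simpa [dotProduct_vecMulVec_self_mulVec] using h _ (posSemidef_vecMulVec_self_star v)
  obtain ⟨hα₁, hα₂⟩ := abs_le.mp (abs_dotProduct_div_dotProduct_self_le_one (hsq y))
  exact ⟨_, hα₁, hα₂, eq_smul_of_forall_sq_dotProduct_le hsq⟩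
end

section
/- Let A₀, A₁, …, A_d ∈ ℝ^{m×n}, b ∈ ℝ^m, and A(θ) = A₀ + Σ_{j=1}^d θ_j A_j. Suppose the matrices P_i ∈ ℝ^{m_i×m}, i = 1,…,d, satisfy P_i A_j = 0 for i ≠ j (i, j ∈ {1,…,d}), and P₀ ∈ ℝ^{m₀×m} satisfies P₀A_j = 0 for all j ∈ {1,…,d}. If z ∈ ℝ^n and θ ∈ ℝ^d with −1 ≤ θ ≤ 1 satisfy A(θ)z = b, then: (i) for every i ∈ {1,…,d} and every positive semidefinite N_i ∈ S₊^{m_i}, (b − A₀z)ᵀP_iᵀN_iP_i(b − A₀z) ≤ zᵀA_iᵀP_iᵀN_iP_iA_i z; and (ii) P₀A₀z = P₀b. -/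
open Matrix

/-!
Subtracting `A₀z` from the equation gives `b - A₀z = ∑ⱼ θⱼ Aⱼ z`. Applying `Pᵢ` kills every
term but the `i`-th, so `Pᵢ(b - A₀z) = θᵢ PᵢAᵢz`, and the quadratic form of `Nᵢ ⪰ 0` at this
vector is `θᵢ²` times its value at `PᵢAᵢz`, hence no larger since `θᵢ² ≤ 1`. Applying `P₀`
kills every term, which is the equation `P₀A₀z = P₀b`.
-/

section

variable {ι l m n R : Type*} [Fintype ι] [Fintype m] [Fintype n] [CommRing R]

theorem mulVec_mulVec_sum_smul (P : Matrix l m R) (A : ι → Matrix m n R) (θ : ι → R)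
    (z : n → R) :
    P *ᵥ ((∑ j, θ j • A j) *ᵥ z) = ∑ j, θ j • (P *ᵥ (A j *ᵥ z)) := by
  rw [sum_mulVec, mulVec_sum]
  simp only [smul_mulVec, mulVec_smul]

theorem mulVec_mulVec_sum_smul_of_mul_eq_zero [DecidableEq ι] (P : Matrix l m R)
    (A : ι → Matrix m n R) (θ : ι → R) (z : n → R) {i : ι}
    (hP : ∀ j, j ≠ i → P * A j = 0) :
    P *ᵥ ((∑ j, θ j • A j) *ᵥ z) = θ i • (P *ᵥ (A i *ᵥ z)) := by
  rw [mulVec_mulVec_sum_smul, Finset.sum_eq_single i (fun j _ hj ↦ ?_) (by simp)]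
  rw [mulVec_mulVec, hP j hj, zero_mulVec, smul_zero]

theorem mulVec_mulVec_sum_smul_of_forall_mul_eq_zero (P : Matrix l m R)
    (A : ι → Matrix m n R) (θ : ι → R) (z : n → R) (hP : ∀ j, P * A j = 0) :
    P *ᵥ ((∑ j, θ j • A j) *ᵥ z) = 0 := by
  rw [mulVec_mulVec_sum_smul]
  exact Finset.sum_eq_zero fun j _ ↦ by rw [mulVec_mulVec, hP j, zero_mulVec, smul_zero]

end

theorem Matrix.PosSemidef.dotProduct_mulVec_smul_le {n R : Type*} [Fintype n] [CommRing R]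
    [LinearOrder R] [IsStrictOrderedRing R] [StarRing R] [TrivialStar R]
    {N : Matrix n n R} (hN : N.PosSemidef) (v : n → R) {c : R} (hc : |c| ≤ 1) :
    (c • v) ⬝ᵥ (N *ᵥ (c • v)) ≤ v ⬝ᵥ (N *ᵥ v) := by
  have hq : 0 ≤ v ⬝ᵥ (N *ᵥ v) := by simpa using hN.dotProduct_mulVec_nonneg v
  have hc2 : c * c ≤ 1 := by nlinarith [abs_nonneg c, abs_mul_abs_self c]
  calc (c • v) ⬝ᵥ (N *ᵥ (c • v)) = (c * c) * (v ⬝ᵥ (N *ᵥ v)) := by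
        rw [mulVec_smul, smul_dotProduct, dotProduct_smul, smul_eq_mul, smul_eq_mul, mul_assoc]
    _ ≤ v ⬝ᵥ (N *ᵥ v) := mul_le_of_le_one_left hq hc2

/-- If `z, θ` with `-1 ≤ θ ≤ 1` satisfy the physics equation
`(A₀ + ∑ⱼ θⱼ Aⱼ) z = b`, then the quadratic inequalities
`(b - A₀z)ᵀPᵢᵀNᵢPᵢ(b - A₀z) ≤ zᵀAᵢᵀPᵢᵀNᵢPᵢAᵢz` hold for every `i` and every
positive semidefinite `Nᵢ`, and moreover `P₀A₀z = P₀b`. -/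
theorem quad_ineqs_of_physics (d m n m0 : ℕ) (mdim : Fin d → ℕ)
    (A0 : Matrix (Fin m) (Fin n) ℝ) (A : Fin d → Matrix (Fin m) (Fin n) ℝ)
    (b : Fin m → ℝ)
    (P : (i : Fin d) → Matrix (Fin (mdim i)) (Fin m) ℝ)
    (P0 : Matrix (Fin m0) (Fin m) ℝ)
    (hP : ∀ i j : Fin d, i ≠ j → P i * A j = 0)
    (hP0 : ∀ j : Fin d, P0 * A j = 0)
    (z : Fin n → ℝ) (θ : Fin d → ℝ) (hθ : ∀ i, -1 ≤ θ i ∧ θ i ≤ 1)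
    (hphys : (A0 + ∑ j, θ j • A j) *ᵥ z = b) :
    (∀ i : Fin d, ∀ N : Matrix (Fin (mdim i)) (Fin (mdim i)) ℝ, N.PosSemidef →
      (P i *ᵥ (b - A0 *ᵥ z)) ⬝ᵥ (N *ᵥ (P i *ᵥ (b - A0 *ᵥ z))) ≤
        (P i *ᵥ (A i *ᵥ z)) ⬝ᵥ (N *ᵥ (P i *ᵥ (A i *ᵥ z)))) ∧
    P0 *ᵥ (A0 *ᵥ z) = P0 *ᵥ b := by
  have hres : b - A0 *ᵥ z = (∑ j, θ j • A j) *ᵥ z := by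
    rw [← hphys, add_mulVec, add_sub_cancel_left]
  refine ⟨fun i N hN ↦ ?_, ?_⟩
  · rw [hres, mulVec_mulVec_sum_smul_of_mul_eq_zero (P i) A θ z fun j hj ↦ hP i j hj.symm]
    exact hN.dotProduct_mulVec_smul_le _ (abs_le.mpr (hθ i))
  · have hP0res : P0 *ᵥ (b - A0 *ᵥ z) = 0 := by
      rw [hres, mulVec_mulVec_sum_smul_of_forall_mul_eq_zero P0 A θ z hP0]
    rw [mulVec_sub, sub_eq_zero] at hP0res
    exact hP0res.symm
end

section
/- Let A₀, A₁, …, A_d ∈ ℝ^{m×n}, b ∈ ℝ^m, and A(θ) = A₀ + Σ_{j=1}^d θ_j A_j. Suppose P_i ∈ ℝ^{m_i×m} (i = 1,…,d) satisfy P_i A_j = 0 for i ≠ j (i, j ∈ {1,…,d}), P₀ ∈ ℝ^{m₀×m} satisfies P₀A_j = 0 for j = 1,…,d, and there exist matrices M_i ∈ ℝ^{m×m_i} (i = 0,…,d) with Σ_{i=0}^d M_iP_i = I. If z ∈ ℝ^n satisfies (b − A₀z)ᵀP_iᵀN_iP_i(b − A₀z) ≤ zᵀA_iᵀP_iᵀN_iP_iA_i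 z for every i ∈ {1,…,d} and every positive semidefinite N_i ∈ S₊^{m_i}, and P₀A₀z = P₀b, then there exists θ ∈ ℝ^d with −1 ≤ θ ≤ 1 such that A(θ)z = b. -/
open Matrix


lemma vmv_mulVec {k : ℕ} (w x : Fin k → ℝ) :
    vecMulVec w w *ᵥ x = (w ⬝ᵥ x) • w := by
  ext i
  simp only [vecMulVec, mulVec, dotProduct, Pi.smul_apply, smul_eq_mul, of_apply,
    Finset.sum_mul]
  exact Finset.sum_congr rfl fun j _ => by ring

lemma dp_self_nonneg {k : ℕ} (w : Fin k → ℝ) : 0 ≤ w ⬝ᵥ w :=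
  Finset.sum_nonneg fun i _ => mul_self_nonneg (w i)

lemma dp_self_pos {k : ℕ} {w : Fin k → ℝ} (hw : w ≠ 0) : 0 < w ⬝ᵥ w :=
  lt_of_le_of_ne (dp_self_nonneg w) fun h => hw (dotProduct_self_eq_zero.mp h.symm)

lemma psd_vecMulVec {k : ℕ} (w : Fin k → ℝ) : (vecMulVec w w).PosSemidef := by
  refine Matrix.PosSemidef.of_dotProduct_mulVec_nonneg ?_ ?_
  · ext i j; simp [vecMulVec, conjTranspose, mul_comm]
  · intro x
    rw [vmv_mulVec, dotProduct_smul]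
    have : star x ⬝ᵥ w = w ⬝ᵥ x := by simp [dotProduct_comm]
    rw [this, smul_eq_mul]
    exact mul_self_nonneg _

lemma dot_vmv {k : ℕ} (w u : Fin k → ℝ) :
    u ⬝ᵥ (vecMulVec w w *ᵥ u) = (w ⬝ᵥ u)^2 := by
  rw [vmv_mulVec, dotProduct_smul, dotProduct_comm u w, smul_eq_mul]
  ring

lemma exists_scalar {k : ℕ} (u v : Fin k → ℝ)
    (h : ∀ w : Fin k → ℝ, (w ⬝ᵥ u)^2 ≤ (w ⬝ᵥ v)^2) :
    ∃ t : ℝ, -1 ≤ t ∧ t ≤ 1 ∧ u = t • v := by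
  by_cases hv : v = 0
  · refine ⟨0, by norm_num, by norm_num, ?_⟩
    have h1 := h u
    simp [hv] at h1
    have hu : u = 0 := by
      by_contra hne
      exact hne h1
    simp [hu, hv]
  · have hvv : 0 < v ⬝ᵥ v := dp_self_pos hv
    set t : ℝ := (v ⬝ᵥ u) / (v ⬝ᵥ v) with ht
    set w : Fin k → ℝ := u - t • v with hwdef
    have hwv : w ⬝ᵥ v = 0 := by
      rw [hwdef, sub_dotProduct, smul_dotProduct, smul_eq_mul, ht,
        dotProduct_comm u v]
      field_simp
      ring
    have h1 : (w ⬝ᵥ u)^2 ≤ (w ⬝ᵥ v)^2 := h w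
    rw [hwv] at h1
    have hwu : w ⬝ᵥ u = 0 := by nlinarith
    have hww : w ⬝ᵥ w = 0 := by
      have heq : w ⬝ᵥ w = w ⬝ᵥ u - t * (w ⬝ᵥ v) := by
        rw [hwdef, dotProduct_sub, dotProduct_smul, smul_eq_mul]
      rw [heq, hwu, hwv]; ring
    have hw0 : w = 0 := dotProduct_self_eq_zero.mp hww
    have hu : u = t • v := by
      have h2 : u - t • v = 0 := hwdef ▸ hw0
      exact sub_eq_zero.mp h2
    have hb := h v
    rw [hu, dotProduct_smul, smul_eq_mul] at hb
    have ht2 : t^2 ≤ 1 := by nlinarith [mul_pos hvv hvv]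
    exact ⟨t, by nlinarith, by nlinarith, hu⟩

lemma sum_mulVec' {ι : Type*} {p q : ℕ} (s : Finset ι) (C : ι → Matrix (Fin p) (Fin q) ℝ)
    (z : Fin q → ℝ) : (∑ j ∈ s, C j) *ᵥ z = ∑ j ∈ s, C j *ᵥ z := by
  ext i
  simp only [mulVec, dotProduct, Matrix.sum_apply, Finset.sum_mul, Finset.sum_apply]
  rw [Finset.sum_comm]

lemma mulVec_sum' {ι : Type*} {p q : ℕ} (s : Finset ι) (A : Matrix (Fin p) (Fin q) ℝ)
    (x : ι → Fin q → ℝ) : A *ᵥ (∑ j ∈ s, x j) = ∑ j ∈ s, A *ᵥ x j :=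
  map_sum A.mulVecLin x s


/-- Tightness: if `∑ᵢ MᵢPᵢ = I` and `z` satisfies the quadratic inequalities
for all PSD `Nᵢ` along with the affine constraint `P₀A₀z = P₀b`, then there
exists `θ` with `-1 ≤ θ ≤ 1` such that `(A₀ + ∑ⱼ θⱼ Aⱼ) z = b`. -/
theorem physics_of_quad_ineqs (d m n m0 : ℕ) (mdim : Fin d → ℕ)
    (A0 : Matrix (Fin m) (Fin n) ℝ) (A : Fin d → Matrix (Fin m) (Fin n) ℝ)
    (b : Fin m → ℝ)
    (P : (i : Fin d) → Matrix (Fin (mdim i)) (Fin m) ℝ)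
    (P0 : Matrix (Fin m0) (Fin m) ℝ)
    (hP : ∀ i j : Fin d, i ≠ j → P i * A j = 0)
    (hP0 : ∀ j : Fin d, P0 * A j = 0)
    (M : (i : Fin d) → Matrix (Fin m) (Fin (mdim i)) ℝ)
    (M0 : Matrix (Fin m) (Fin m0) ℝ)
    (hM : M0 * P0 + ∑ i, M i * P i = 1)
    (z : Fin n → ℝ)
    (hineq : ∀ i : Fin d, ∀ N : Matrix (Fin (mdim i)) (Fin (mdim i)) ℝ,
      N.PosSemidef →
      (P i *ᵥ (b - A0 *ᵥ z)) ⬝ᵥ (N *ᵥ (P i *ᵥ (b - A0 *ᵥ z))) ≤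
        (P i *ᵥ (A i *ᵥ z)) ⬝ᵥ (N *ᵥ (P i *ᵥ (A i *ᵥ z))))
    (haff : P0 *ᵥ (A0 *ᵥ z) = P0 *ᵥ b) :
    ∃ θ : Fin d → ℝ, (∀ i, -1 ≤ θ i ∧ θ i ≤ 1) ∧
      (A0 + ∑ j, θ j • A j) *ᵥ z = b := by
  set r : Fin m → ℝ := b - A0 *ᵥ z with hr
  have hkey : ∀ i : Fin d, ∃ t : ℝ, -1 ≤ t ∧ t ≤ 1 ∧
      P i *ᵥ r = t • (P i *ᵥ (A i *ᵥ z)) := by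
    intro i
    apply exists_scalar
    intro w
    have := hineq i (vecMulVec w w) (psd_vecMulVec w)
    rwa [dot_vmv, dot_vmv] at this
  choose θ hθ1 hθ2 hθ3 using hkey
  refine ⟨θ, fun i => ⟨hθ1 i, hθ2 i⟩, ?_⟩
  set x : Fin m → ℝ := ∑ j, θ j • (A j *ᵥ z) with hx
  -- reduce goal to x = r
  have hgoal : (A0 + ∑ j, θ j • A j) *ᵥ z = A0 *ᵥ z + x := by
    rw [add_mulVec, sum_mulVec']
    congr 1
    exact Finset.sum_congr rfl fun j _ => smul_mulVec (θ j) (A j) z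
  rw [hgoal]
  -- P0 kills both x and r
  have hP0r : P0 *ᵥ r = 0 := by
    rw [hr, mulVec_sub, haff, sub_self]
  have hP0x : P0 *ᵥ x = 0 := by
    rw [hx, mulVec_sum']
    apply Finset.sum_eq_zero
    intro j _
    rw [mulVec_smul, mulVec_mulVec, hP0 j, zero_mulVec, smul_zero]
  -- P i agrees on x and r
  have hPx : ∀ i, P i *ᵥ x = P i *ᵥ r := by
    intro i
    rw [hx, mulVec_sum', hθ3 i]
    rw [Finset.sum_eq_single i]
    · rw [mulVec_smul]
    · intro j _ hji
      rw [mulVec_smul, mulVec_mulVec, hP i j (Ne.symm hji), zero_mulVec, smul_zero]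
    · intro hi; exact absurd (Finset.mem_univ i) hi
  have hxr : x = r := by
    have h1 : (M0 * P0 + ∑ i, M i * P i) *ᵥ x = (M0 * P0 + ∑ i, M i * P i) *ᵥ r := by
      rw [add_mulVec, add_mulVec, sum_mulVec', sum_mulVec']
      congr 1
      · rw [← mulVec_mulVec, ← mulVec_mulVec, hP0x, hP0r]
      · exact Finset.sum_congr rfl fun i _ => by
          rw [← mulVec_mulVec, ← mulVec_mulVec, hPx i]
    rwa [hM, one_mulVec, one_mulVec] at h1
  rw [hxr, hr]
  abel
end
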